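/- Let C ⊆ 2^[n] be a degree two code (satisfying the standard conventions). Define the relation i < j iff x_i(1−x_j) ∈ CF(J_C). Then this relation is a strict partial order on [n] (irreflexive, antisymmetric, and transitive). -/

import Mathlib

open MvPolynomial

noncomputable section

abbrev PM (n : ℕ) := MvPolynomial (Fin n) (ZMod 2)

/-- A pseudo-monomial in `F₂[x₁,…,xₙ]`. -/
def IsPseudoMonomial {n : ℕ} (f : PM n) : Prop :=
  ∃ σ τ : Finset (Fin n), Disjoint σ τ ∧
    f = (∏ i ∈ σ, X i) * ∏ j ∈ τ, (1 - X j)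

/-- The indicator pseudo-monomial `ρ_σ`. -/
def rho {n : ℕ} (σ : Finset (Fin n)) : PM n :=
  (∏ i ∈ σ, X i) * ∏ j ∈ σᶜ, (1 - X j)

/-- The neural ideal of a code. -/
def neuralIdeal {n : ℕ} (C : Set (Finset (Fin n))) : Ideal (PM n) :=
  Ideal.span {f | ∃ σ ∉ C, f = rho σ}

/-- The canonical form: minimal (under divisibility) pseudo-monomials in the neural ideal. -/
def CF {n : ℕ} (C : Set (Finset (Fin n))) : Set (PM n) :=
  {f | IsPseudoMonomial f ∧ f ∈ neuralIdeal C ∧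
    ∀ g, IsPseudoMonomial g → g ∈ neuralIdeal C → g ∣ f → g = f}

/-- Evaluation of a polynomial at a codeword. -/
def evalAt {n : ℕ} (c : Finset (Fin n)) (f : PM n) : ZMod 2 :=
  MvPolynomial.eval (fun i => if i ∈ c then 1 else 0) f

/-- The standing conventions on codes. -/
def GoodCode {n : ℕ} (C : Set (Finset (Fin n))) : Prop :=
  ∅ ∈ C ∧ (∀ i : Fin n, ∃ c ∈ C, i ∈ c) ∧
    ∀ i j : Fin n, i ≠ j → ¬(∀ c ∈ C, i ∈ c ↔ j ∈ c)

/-- The interval `[σ,τ]`. -/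
def Icc' {n : ℕ} (σ τ : Finset (Fin n)) : Set (Finset (Fin n)) :=
  {γ | σ ⊆ γ ∧ γ ⊆ τ}

/-- The deletion of a neuron from a code (keeping the ambient index set). -/
def del {n : ℕ} (C : Set (Finset (Fin n))) (i : Fin n) : Set (Finset (Fin n)) :=
  (fun c => c.erase i) '' C

/-- The deletion of the last neuron, as a code on `Fin n`. -/
def delLast {n : ℕ} (C : Set (Finset (Fin (n + 1)))) : Set (Finset (Fin n)) :=
  {d | ∃ c ∈ C, d.map Fin.castSuccEmb = c.erase (Fin.last n)}

/-- Neuron `i` is a `k`-piercing of `C`. -/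
def IsPiercing {n : ℕ} (C : Set (Finset (Fin n))) (i : Fin n) (k : ℕ) : Prop :=
  ∃ σ τ : Finset (Fin n), σ ⊆ τ ∧ i ∉ τ ∧ (τ \ σ).card = k ∧
    Icc' σ τ ⊆ del C i ∧
    C = del C i ∪ Icc' (insert i σ) (insert i τ)

/-- `C` is `k`-inductively pierced. -/
inductive InductivelyPierced {n : ℕ} (k : ℕ) : Set (Finset (Fin n)) → Prop
  | empty : InductivelyPierced k {∅}
  | pierce (C : Set (Finset (Fin n))) (i : Fin n) (k' : ℕ) (hk : k' ≤ k)
      (hp : IsPiercing C i k') (hrec : InductivelyPierced k (del C i)) :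
      InductivelyPierced k C

/-- All elements of the canonical form have degree exactly two. -/
def DegreeTwo {n : ℕ} (C : Set (Finset (Fin n))) : Prop :=
  ∀ f ∈ CF C, f.totalDegree = 2

/-- The general relationship graph `G(C)` of a degree two code. -/
def GRel {n : ℕ} (C : Set (Finset (Fin n))) : SimpleGraph (Fin n) where
  Adj i j := i ≠ j ∧ ∀ f ∈ CF C, f.vars ≠ {i, j}
  symm := ⟨by
    rintro i j ⟨hne, h⟩
    exact ⟨hne.symm, fun f hf => by rw [Finset.pair_comm]; exact h f hf⟩⟩
  loopless := ⟨fun i h => h.1 rfl⟩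

/-- The order relation of `P(C)`: `i < j` iff `xᵢ(1-xⱼ) ∈ CF(J_C)`. -/
def PLt {n : ℕ} (C : Set (Finset (Fin n))) (i j : Fin n) : Prop :=
  X i * (1 - X j) ∈ CF C

/-- A simplicial vertex: its neighborhood is a clique. -/
def IsSimplicial {V : Type*} (G : SimpleGraph V) (v : V) : Prop :=
  G.IsClique (G.neighborSet v)

/-- A chordal graph: every cycle of length at least four has a chord. -/
def IsChordal {V : Type*} (G : SimpleGraph V) : Prop :=
  ∀ (u : V) (w : G.Walk u u), w.IsCycle → 4 ≤ w.length →
    ∃ a b, G.Adj a b ∧ a ∈ w.support ∧ b ∈ w.support ∧ s(a, b) ∉ w.edges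

/-- The code of a collection of sets. -/
def codeOf {X : Type*} {n : ℕ} (U : Fin n → Set X) : Set (Finset (Fin n)) :=
  {σ | ∃ p, ∀ i, p ∈ U i ↔ i ∈ σ}

/-- `S` is a `k`-dimensional sphere: a sphere of positive radius inside a
`(k+1)`-dimensional affine subspace, centered in that subspace. -/
def IsSubSphere {E : Type*} [NormedAddCommGroup E] [NormedSpace ℝ E] (k : ℕ)
    (S : Set E) : Prop :=
  ∃ (A : AffineSubspace ℝ E) (c : E) (ρ : ℝ), 0 < ρ ∧ c ∈ A ∧
    Module.finrank ℝ A.direction = k + 1 ∧ S = (A : Set E) ∩ Metric.sphere c ρ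

/-- The boundary spheres of the balls `B(xᵢ, rᵢ)` form a well-formed collection in `ℝ^d`. -/
def WellFormedBalls {d n : ℕ} (x : Fin n → EuclideanSpace ℝ (Fin d))
    (r : Fin n → ℝ) : Prop :=
  ∀ F : Finset (Fin n), F.Nonempty →
    (F.card ≤ d →
      (⋂ i ∈ F, Metric.sphere (x i) (r i)) = ∅ ∨
        IsSubSphere (d - F.card) (⋂ i ∈ F, Metric.sphere (x i) (r i))) ∧
    (F.card = d + 1 → (⋂ i ∈ F, Metric.sphere (x i) (r i)) = ∅)

/-- `C` has a well-formed realization by open balls in `ℝ^d`. -/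
def HasWFRealization {n : ℕ} (C : Set (Finset (Fin n))) (d : ℕ) : Prop :=
  ∃ (x : Fin n → EuclideanSpace ℝ (Fin d)) (r : Fin n → ℝ),
    (∀ i, 0 < r i) ∧ WellFormedBalls x r ∧
    codeOf (fun i => Metric.ball (x i) (r i)) = C


namespace NeuralAux

variable {n : ℕ}

/-- Abbreviation for a pseudo-monomial given by its two index sets. -/
def pm (A B : Finset (Fin n)) : PM n :=
  (∏ i ∈ A, X i) * ∏ j ∈ B, (1 - X j)

lemma evalAt_pm (c A B : Finset (Fin n)) :
    evalAt c (pm A B) = if A ⊆ c ∧ Disjoint B c then 1 else 0 := by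
  have h1 : evalAt c (∏ i ∈ A, X i) = if A ⊆ c then 1 else 0 := by
    simp only [evalAt, map_prod, eval_X]
    rw [Finset.prod_boole]
    congr 1
  have h2 : evalAt c (∏ j ∈ B, (1 - X j)) = if Disjoint B c then 1 else 0 := by
    simp only [evalAt, map_prod, map_sub, map_one, eval_X]
    have : ∀ j ∈ B, ((1 : ZMod 2) - if j ∈ c then 1 else 0) = if j ∉ c then 1 else 0 := by
      intro j _; split_ifs <;> simp_all
    rw [Finset.prod_congr rfl this, Finset.prod_boole]
    congr 1
    simp [Finset.disjoint_left]
  have : evalAt c (pm A B) = evalAt c (∏ i ∈ A, X i) * evalAt c (∏ j ∈ B, (1 - X j)) :=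
    map_mul _ _ _
  rw [this, h1, h2]
  split_ifs with h hc hc <;> simp_all

lemma evalAt_rho (c σ : Finset (Fin n)) :
    evalAt c (rho σ) = if c = σ then 1 else 0 := by
  have : rho σ = pm σ σᶜ := rfl
  rw [this, evalAt_pm]
  congr 1
  rw [disjoint_compl_left_iff, eq_iff_iff]
  constructor
  · rintro ⟨h1, h2⟩; exact Finset.Subset.antisymm h2 h1
  · rintro rfl; exact ⟨Finset.Subset.refl _, Finset.Subset.refl _⟩

lemma eval_zero_of_mem {C : Set (Finset (Fin n))} {f : PM n}
    (hf : f ∈ neuralIdeal C) {c : Finset (Fin n)} (hc : c ∈ C) : evalAt c f = 0 := by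
  have hle : neuralIdeal C ≤
      RingHom.ker (MvPolynomial.eval fun i => if i ∈ c then (1 : ZMod 2) else 0) := by
    rw [neuralIdeal, Ideal.span_le]
    rintro g ⟨σ, hσ, rfl⟩
    have : evalAt c (rho σ) = 0 := by
      rw [evalAt_rho]
      split_ifs with h
      · exact absurd (h ▸ hc) hσ
      · rfl
    exact this
  exact hle hf

lemma pm_eq_sum (A B : Finset (Fin n)) (hAB : Disjoint A B) :
    pm A B = ∑ t ∈ (A ∪ B)ᶜ.powerset, rho (A ∪ t) := by
  set s := (A ∪ B)ᶜ with hs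
  have h1 : (∑ t ∈ s.powerset, (∏ i ∈ t, X i) * ∏ j ∈ s \ t, ((1 : PM n) - X j)) = 1 := by
    rw [← Finset.prod_add]
    simp
  have key : ∀ t ∈ s.powerset,
      pm A B * ((∏ i ∈ t, X i) * ∏ j ∈ s \ t, (1 - X j)) = rho (A ∪ t) := by
    intro t ht
    rw [Finset.mem_powerset] at ht
    have htA : Disjoint A t := by
      rw [Finset.disjoint_right]
      intro a hat
      have := ht hat
      rw [hs, Finset.mem_compl, Finset.mem_union] at this
      tauto
    have hcompl : (A ∪ t)ᶜ = B ∪ (s \ t) := by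
      ext x
      have hx1 : x ∈ A → x ∉ B := fun h => Finset.disjoint_left.mp hAB h
      have hx2 : x ∈ t → x ∉ A ∧ x ∉ B := by
        intro h
        have := ht h
        rw [hs, Finset.mem_compl, Finset.mem_union] at this
        tauto
      simp only [Finset.mem_compl, Finset.mem_union, Finset.mem_sdiff, hs]
      tauto
    have hBs : Disjoint B (s \ t) := by
      rw [Finset.disjoint_left]
      intro b hb hbs
      rw [Finset.mem_sdiff, hs, Finset.mem_compl, Finset.mem_union] at hbs
      tauto
    rw [rho, hcompl, Finset.prod_union htA, Finset.prod_union hBs, pm]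
    ring
  rw [Finset.sum_congr rfl fun t ht => (key t ht).symm, ← Finset.mul_sum, h1, mul_one]

lemma pm_mem {C : Set (Finset (Fin n))} {A B : Finset (Fin n)} (hAB : Disjoint A B)
    (h : ∀ c ∈ C, ¬(A ⊆ c ∧ Disjoint B c)) : pm A B ∈ neuralIdeal C := by
  rw [pm_eq_sum A B hAB]
  refine Ideal.sum_mem _ fun t ht => Ideal.subset_span ⟨A ∪ t, fun hmem => ?_, rfl⟩
  rw [Finset.mem_powerset] at ht
  refine h _ hmem ⟨Finset.subset_union_left, ?_⟩
  rw [Finset.disjoint_union_right]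
  refine ⟨hAB.symm, ?_⟩
  rw [Finset.disjoint_right]
  intro b hbt
  have := ht hbt
  rw [Finset.mem_compl, Finset.mem_union] at this
  tauto

lemma not_cond_of_mem {C : Set (Finset (Fin n))} {A B : Finset (Fin n)}
    (hmem : pm A B ∈ neuralIdeal C) {c : Finset (Fin n)} (hc : c ∈ C) :
    ¬(A ⊆ c ∧ Disjoint B c) := by
  intro hcond
  have := eval_zero_of_mem hmem hc
  rw [evalAt_pm, if_pos hcond] at this
  exact one_ne_zero this

end NeuralAux

open NeuralAux

/-- for a degree two code, `i < j ↔ xᵢ(1-xⱼ) ∈ CF(J_C)` is a strict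
partial order. -/
theorem PLt_strict_partial_order {n : ℕ} (C : Set (Finset (Fin n)))
    (hgood : GoodCode C) (hdeg : DegreeTwo C) :
    (∀ i, ¬ PLt C i i) ∧ (∀ i j, PLt C i j → ¬ PLt C j i) ∧
      Transitive (PLt C) := by
  obtain ⟨hempty, hcov, hsep⟩ := hgood
  have hpm_eq : ∀ i j : Fin n, X i * (1 - X j) = pm {i} {j} := by
    intro i j; simp [pm]
  -- irreflexivity
  have irrefl : ∀ i, ¬ PLt C i i := by
    intro i h
    obtain ⟨σ, τ, hdisj, heq⟩ := h.1
    have h1 := congrArg (evalAt σ) heq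
    have hrhs : evalAt σ ((∏ i ∈ σ, X i) * ∏ j ∈ τ, (1 - X j)) = 1 := by
      rw [show ((∏ i ∈ σ, X i) * ∏ j ∈ τ, (1 - X j)) = pm σ τ from rfl, evalAt_pm,
        if_pos ⟨Finset.Subset.refl _, hdisj.symm⟩]
    rw [hrhs] at h1
    by_cases hi : i ∈ σ <;> simp [evalAt, hi] at h1
  -- extracting the implication from ideal membership
  have key : ∀ {i j : Fin n}, X i * (1 - X j) ∈ neuralIdeal C →
      ∀ c ∈ C, i ∈ c → j ∈ c := by
    intro i j hmem c hc hi
    by_contra hj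
    rw [hpm_eq] at hmem
    exact not_cond_of_mem hmem hc
      ⟨Finset.singleton_subset_iff.mpr hi, Finset.disjoint_singleton_left.mpr hj⟩
  -- antisymmetry
  have antisym : ∀ i j, PLt C i j → ¬ PLt C j i := by
    intro i j hij hji
    rcases eq_or_ne i j with rfl | hne
    · exact irrefl i hij
    · exact hsep i j hne fun c hc => ⟨key hij.2.1 c hc, key hji.2.1 c hc⟩
  refine ⟨irrefl, antisym, ?_⟩
  -- transitivity
  intro i j k hij hjk
  have hik : i ≠ k := by rintro rfl; exact antisym _ _ hij hjk
  have hvanish : ∀ c ∈ C, i ∈ c → k ∈ c := fun c hc hi =>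
    key hjk.2.1 c hc (key hij.2.1 c hc hi)
  have hdisj : Disjoint ({i} : Finset (Fin n)) {k} := by
    rw [Finset.disjoint_singleton_left, Finset.mem_singleton]; exact hik
  have hmem : pm {i} {k} ∈ neuralIdeal C := by
    refine pm_mem hdisj ?_
    rintro c hc ⟨h1, h2⟩
    rw [Finset.singleton_subset_iff] at h1
    rw [Finset.disjoint_singleton_left] at h2
    exact h2 (hvanish c hc h1)
  refine ⟨⟨{i}, {k}, hdisj, by simp [pm]⟩, by rwa [hpm_eq], ?_⟩
  rintro g ⟨A, B, hABd, rfl⟩ hgmem hgdvd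
  obtain ⟨h, hh⟩ := hgdvd
  rw [show ((∏ i ∈ A, X i) * ∏ j ∈ B, (1 - X j)) = pm A B from rfl] at hgmem hh ⊢
  have hval : ∀ c : Finset (Fin n), i ∈ c → k ∉ c → (A ⊆ c ∧ Disjoint B c) := by
    intro c hi hk
    have h1 := congrArg (evalAt c) hh
    rw [hpm_eq, evalAt_pm, if_pos ⟨Finset.singleton_subset_iff.mpr hi,
      Finset.disjoint_singleton_left.mpr hk⟩] at h1
    by_contra hcon
    rw [show evalAt c (pm A B * h) = evalAt c (pm A B) * evalAt c h from map_mul _ _ _,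
      evalAt_pm, if_neg hcon, zero_mul] at h1
    exact one_ne_zero h1
  have hA : A ⊆ {i} :=
    (hval {i} (Finset.mem_singleton_self i) (by
      rw [Finset.mem_singleton]; exact fun h' => hik h'.symm)).1
  have hB : B ⊆ {k} := by
    have h2 := (hval ({k}ᶜ) (by
        rw [Finset.mem_compl, Finset.mem_singleton]; exact hik)
      (by simp)).2
    rwa [disjoint_compl_right_iff] at h2
  have hAeq : A = {i} := by
    rcases Finset.subset_singleton_iff.mp hA with rfl | h'
    · exact absurd ⟨Finset.empty_subset _, by simp⟩
        (not_cond_of_mem hgmem hempty)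
    · exact h'
  have hBeq : B = {k} := by
    rcases Finset.subset_singleton_iff.mp hB with rfl | h'
    · obtain ⟨c₀, hc₀, hic₀⟩ := hcov i
      exact absurd ⟨hAeq ▸ Finset.singleton_subset_iff.mpr hic₀, by simp⟩
        (not_cond_of_mem hgmem hc₀)
    · exact h'
  rw [hAeq, hBeq, hpm_eq]

end
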